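/- (Energy inequality for fractional Hamiltonian systems.) Let 0 < γ < 1, T ∈ (0, ∞], let E : ℝ^m → ℝ be convex and continuously differentiable, let J be an m × m real antisymmetric matrix (Jᵀ = −J), and let v : [0, T) → ℝ^m be continuously differentiable and satisfy, for all t ∈ (0, T), (1/Γ(1−γ)) ∫_0^t (t−s)^{−γ} v′(s) ds = J ∇E(v(t)). Then E(v(t)) ≤ E(v(0)) for all t ∈ [0, T); i.e. the fractional Hamiltonian system does not increase the energy. -/

import Mathlib

/-!
Suppose `E (v t₀) > E (v 0)` and let `t₁` maximize `E ∘ v` on `[0, t₀]`, so `t₁ > 0`. With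
`c = ∇E (v t₁)`, convexity gives `f s := ⟪c, v s - v t₁⟫ ≤ E (v s) - E (v t₁) ≤ 0` on `[0, t₁]`,
`f t₁ = 0` and `f 0 < 0`. Integrating by parts against the increasing kernel `(t₁ - s) ^ (-γ)`
gives `∫₀^{t₁} (t₁ - s) ^ (-γ) f' s ds ≥ -t₁ ^ (-γ) f 0 > 0`, whereas by the equation this
integral is `Γ(1 - γ) ⟪c, J c⟫ = 0`, since `J` is antisymmetric.
-/

open MeasureTheory Set Filter Topology Matrix intervalIntegral
open scoped ENNReal

theorem ConvexOn.le_sub_of_hasFDerivAt {F : Type*} [NormedAddCommGroup F] [NormedSpace ℝ F]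
    {s : Set F} {f : F → ℝ} {f' : F →L[ℝ] ℝ} {x y : F} (hf : ConvexOn ℝ s f) (hx : x ∈ s)
    (hy : y ∈ s) (hf' : HasFDerivAt f f' x) : f' (y - x) ≤ f y - f x := by
  set ℓ : ℝ →ᵃ[ℝ] F := AffineMap.lineMap x y
  have hℓ0 : ℓ 0 = x := AffineMap.lineMap_apply_zero x y
  have hℓ1 : ℓ 1 = y := AffineMap.lineMap_apply_one x y
  have hline : ConvexOn ℝ (ℓ ⁻¹' s) (f ∘ ℓ) := hf.comp_affineMap ℓ
  have hderiv : HasDerivAt (f ∘ ℓ) (f' (y - x)) 0 := by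
    refine HasFDerivAt.comp_hasDerivAt (0 : ℝ) ?_ AffineMap.hasDerivAt_lineMap
    rwa [hℓ0]
  simpa [slope_def_field, hℓ0, hℓ1] using
    hline.le_slope_of_hasDerivAt (by simpa [hℓ0]) (by simpa [hℓ1]) zero_lt_one hderiv

theorem ConvexOn.inner_sub_le_of_hasGradientAt {F : Type*} [NormedAddCommGroup F]
    [InnerProductSpace ℝ F] [CompleteSpace F] {s : Set F} {f : F → ℝ} {g x y : F}
    (hf : ConvexOn ℝ s f) (hx : x ∈ s) (hy : y ∈ s) (hg : HasGradientAt f g x) :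
    inner ℝ g (y - x) ≤ f y - f x := by
  simpa using hf.le_sub_of_hasFDerivAt hx hy hg.hasFDerivAt

theorem Matrix.dotProduct_mulVec_self_eq_zero_of_transpose_eq_neg {n R : Type*} [Fintype n]
    [CommRing R] [NoZeroDivisors R] [CharZero R] {J : Matrix n n R} (hJ : Jᵀ = -J) (x : n → R) :
    x ⬝ᵥ J *ᵥ x = 0 := by
  rw [← CharZero.eq_neg_self_iff]
  conv_lhs => rw [Matrix.dotProduct_mulVec, ← Matrix.mulVec_transpose, hJ, Matrix.neg_mulVec,
    neg_dotProduct, dotProduct_comm]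

theorem EuclideanSpace.inner_mulVec_self_eq_zero_of_transpose_eq_neg {n : Type*} [Fintype n]
    {J : Matrix n n ℝ} (hJ : Jᵀ = -J) (x : EuclideanSpace ℝ n) :
    inner ℝ x ((EuclideanSpace.equiv n ℝ).symm (J *ᵥ EuclideanSpace.equiv n ℝ x)) = 0 := by
  rw [EuclideanSpace.inner_eq_star_dotProduct, dotProduct_comm]
  exact Matrix.dotProduct_mulVec_self_eq_zero_of_transpose_eq_neg hJ x

theorem intervalIntegrable_sub_rpow {r : ℝ} (hr : -1 < r) (t a b : ℝ) :
    IntervalIntegrable (fun s => (t - s) ^ r) volume a b := by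
  simpa using (intervalIntegrable_rpow' hr (a := t - a) (b := t - b)).comp_sub_left t

theorem sub_le_integral_mul_deriv_of_nonpos {a b : ℝ} (hab : a ≤ b) {u u' f f' : ℝ → ℝ}
    (hu : ∀ x ∈ Icc a b, HasDerivAt u (u' x) x) (hf : ∀ x ∈ Icc a b, HasDerivAt f (f' x) x)
    (hu'i : IntervalIntegrable u' volume a b) (hf'i : IntervalIntegrable f' volume a b)
    (hu'_nonneg : ∀ x ∈ Icc a b, 0 ≤ u' x) (hf_nonpos : ∀ x ∈ Icc a b, f x ≤ 0) :
    u b * f b - u a * f a ≤ ∫ x in a..b, u x * f' x := by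
  rw [← uIcc_of_le hab] at hu hf
  rw [integral_mul_deriv_eq_deriv_mul hu hf hu'i hf'i, le_sub_self_iff,
    integral_of_le hab]
  exact setIntegral_nonpos measurableSet_Ioc fun x hx =>
    mul_nonpos_of_nonneg_of_nonpos (hu'_nonneg x (Ioc_subset_Icc_self hx))
      (hf_nonpos x (Ioc_subset_Icc_self hx))

theorem tendsto_sub_rpow_neg_mul_nhdsLT {γ t f't : ℝ} (hγ : γ < 1) {f : ℝ → ℝ}
    (hf : HasDerivAt f f't t) (hft : f t = 0) :
    Tendsto (fun b => (t - b) ^ (-γ) * f b) (𝓝[<] t) (𝓝 0) := by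
  have hslope : Tendsto (slope f t) (𝓝[<] t) (𝓝 f't) :=
    (hasDerivAt_iff_tendsto_slope.mp hf).mono_left (nhdsWithin_mono _ fun b hb => ne_of_lt hb)
  have hpow : Tendsto (fun b => (t - b) ^ (1 - γ)) (𝓝[<] t) (𝓝 0) := by
    have hcont : Continuous fun b : ℝ => (t - b) ^ (1 - γ) :=
      (continuous_const.sub continuous_id).rpow_const fun _ => Or.inr (by linarith)
    simpa [Real.zero_rpow (by linarith : 1 - γ ≠ 0)] using hcont.continuousWithinAt (x := t)
      (s := Iio t) |>.tendsto
  -- for `b < t`, `(t - b) ^ (-γ) * f b = -((t - b) ^ (1 - γ) * slope f t b)`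
  have hprod := (hpow.mul hslope).neg
  rw [zero_mul, neg_zero] at hprod
  refine hprod.congr' (eventually_nhdsWithin_of_forall fun b (hb : b < t) => ?_)
  have hpos : 0 < t - b := sub_pos.mpr hb
  rw [slope_def_field, hft, sub_zero, sub_eq_add_neg (1 : ℝ), add_comm, Real.rpow_add hpos,
    Real.rpow_one]
  field_simp [hpos.ne', (sub_neg.mpr hb).ne]
  ring

theorem neg_le_integral_sub_rpow_neg_mul_deriv_of_nonpos {γ a t : ℝ} (hγ0 : 0 ≤ γ) (hγ1 : γ < 1)
    (hat : a < t) {f f' : ℝ → ℝ} (hf : ∀ s ∈ Icc a t, HasDerivAt f (f' s) s)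
    (hf' : ContinuousOn f' (Icc a t)) (hf_nonpos : ∀ s ∈ Icc a t, f s ≤ 0) (hft : f t = 0) :
    -((t - a) ^ (-γ) * f a) ≤ ∫ s in a..t, (t - s) ^ (-γ) * f' s := by
  have hint : IntervalIntegrable (fun s => (t - s) ^ (-γ) * f' s) volume a t :=
    (intervalIntegrable_sub_rpow (by linarith) t a t).mul_continuousOn
      (by rwa [uIcc_of_le hat.le])
  -- integrate by parts on `[a, b]` with `b < t`, where the kernel is smooth, then let `b → t`
  have htrunc : ∀ b ∈ Ico a t, (t - b) ^ (-γ) * f b - (t - a) ^ (-γ) * f a ≤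
      ∫ s in a..b, (t - s) ^ (-γ) * f' s := by
    intro b hb
    have hsub : Icc a b ⊆ Icc a t := Icc_subset_Icc_right hb.2.le
    have hpos : ∀ s ∈ Icc a b, 0 < t - s := fun s hs => by linarith [hs.2, hb.2]
    refine sub_le_integral_mul_deriv_of_nonpos hb.1 (u := fun s => (t - s) ^ (-γ))
      (u' := fun s => γ * (t - s) ^ (-γ - 1))
      (fun s hs => ?_) (fun s hs => hf s (hsub hs)) ?_
      ((hf'.mono hsub).intervalIntegrable_of_Icc hb.1)
      (fun s hs => mul_nonneg hγ0 (Real.rpow_nonneg (hpos s hs).le _))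
      (fun s hs => hf_nonpos s (hsub hs))
    · convert ((hasDerivAt_id' s).const_sub t).rpow_const (p := -γ) (Or.inl (hpos s hs).ne')
        using 1
      ring
    · refine ContinuousOn.intervalIntegrable_of_Icc hb.1 (continuousOn_const.mul ?_)
      exact (continuousOn_const.sub continuousOn_id).rpow_const fun s hs =>
        Or.inl (hpos s hs).ne'
  have hlim_int : Tendsto (fun b => ∫ s in a..b, (t - s) ^ (-γ) * f' s) (𝓝[<] t)
      (𝓝 (∫ s in a..t, (t - s) ^ (-γ) * f' s)) :=
    (continuousOn_primitive_interval' hint left_mem_uIcc t right_mem_uIcc).mono_of_mem_nhdsWithin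
      (by rw [uIcc_of_le hat.le]; exact Icc_mem_nhdsLT hat)
  have hlim_bdry := (tendsto_sub_rpow_neg_mul_nhdsLT hγ1 (hf t ⟨hat.le, le_rfl⟩) hft).sub_const
    ((t - a) ^ (-γ) * f a)
  rw [zero_sub] at hlim_bdry
  exact le_of_tendsto_of_tendsto hlim_bdry hlim_int
    (eventually_of_mem (Ico_mem_nhdsLT hat) htrunc)

theorem exists_mem_Ioc_isMaxOn_Icc_of_lt {α β : Type*} [ConditionallyCompleteLinearOrder α]
    [TopologicalSpace α] [OrderTopology α] [LinearOrder β] [TopologicalSpace β]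
    [OrderClosedTopology β] {a b : α} {φ : α → β} (hab : a ≤ b)
    (hφ : ContinuousOn φ (Icc a b)) (hlt : φ a < φ b) :
    ∃ c ∈ Ioc a b, φ a < φ c ∧ IsMaxOn φ (Icc a c) c := by
  obtain ⟨c, ⟨hac, hcb⟩, hmax⟩ := isCompact_Icc.exists_isMaxOn (nonempty_Icc.2 hab) hφ
  have hφc : φ a < φ c := hlt.trans_le (hmax ⟨hab, le_rfl⟩)
  refine ⟨c, ⟨hac.lt_of_ne ?_, hcb⟩, hφc, hmax.on_subset (Icc_subset_Icc_right hcb)⟩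
  rintro rfl
  exact hφc.false

theorem integral_sub_rpow_neg_mul_inner_eq_zero_of_transpose_eq_neg {n : Type*} [Fintype n]
    {γ a t : ℝ} (hγ : γ < 1) (hat : a ≤ t) {J : Matrix n n ℝ} (hJ : Jᵀ = -J)
    {u : ℝ → EuclideanSpace ℝ n} (hu : ContinuousOn u (Icc a t)) {c : EuclideanSpace ℝ n}
    (h : (1 / Real.Gamma (1 - γ)) • (∫ s in a..t, (t - s) ^ (-γ) • u s) =
      (EuclideanSpace.equiv n ℝ).symm (J *ᵥ EuclideanSpace.equiv n ℝ c)) :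
    ∫ s in a..t, (t - s) ^ (-γ) * inner ℝ c (u s) = 0 := by
  have hint : IntervalIntegrable (fun s => (t - s) ^ (-γ) • u s) volume a t :=
    (intervalIntegrable_sub_rpow (by linarith) t a t).smul_continuousOn (by rwa [uIcc_of_le hat])
  have hΓ : Real.Gamma (1 - γ) ≠ 0 := (Real.Gamma_pos_of_pos (by linarith)).ne'
  have hcomm := (innerSL ℝ c).intervalIntegral_comp_comm hint
  simp only [innerSL_apply_apply, inner_smul_right] at hcomm
  have hc := congrArg (inner ℝ c) h
  rw [inner_smul_right, EuclideanSpace.inner_mulVec_self_eq_zero_of_transpose_eq_neg hJ] at hc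
  simpa [hcomm, hΓ] using hc

theorem fractional_hamiltonian_energy_inequality_general
    (γ : ℝ) (hγ0 : 0 < γ) (hγ1 : γ < 1) (T : ℝ≥0∞) (m : ℕ)
    (E : EuclideanSpace ℝ (Fin m) → ℝ)
    (g : EuclideanSpace ℝ (Fin m) → EuclideanSpace ℝ (Fin m))
    (hconv : ConvexOn ℝ Set.univ E)
    (hgrad : ∀ x : EuclideanSpace ℝ (Fin m), HasGradientAt E (g x) x)
    (J : Matrix (Fin m) (Fin m) ℝ)
    (hJ : J.transpose = -J)
    (v v' : ℝ → EuclideanSpace ℝ (Fin m))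
    (hderiv : ∀ t : ℝ, 0 ≤ t → ENNReal.ofReal t < T → HasDerivAt v (v' t) t)
    (hv'cont : ContinuousOn v' {t : ℝ | 0 ≤ t ∧ ENNReal.ofReal t < T})
    (heq : ∀ t : ℝ, 0 < t → ENNReal.ofReal t < T →
      (1 / Real.Gamma (1 - γ)) • (∫ s in (0:ℝ)..t, (t - s) ^ (-γ) • v' s) =
        (EuclideanSpace.equiv (Fin m) ℝ).symm
          (J.mulVec ((EuclideanSpace.equiv (Fin m) ℝ) (g (v t))))) :
    ∀ t : ℝ, 0 ≤ t → ENNReal.ofReal t < T → E (v t) ≤ E (v 0) := by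
  intro t₀ ht₀ ht₀T
  by_contra! hlt
  have hdom : Icc 0 t₀ ⊆ {t : ℝ | 0 ≤ t ∧ ENNReal.ofReal t < T} := fun s hs =>
    ⟨hs.1, (ENNReal.ofReal_le_ofReal hs.2).trans_lt ht₀T⟩
  have hEv : ContinuousOn (fun s => E (v s)) (Icc 0 t₀) := fun s hs =>
    ((hgrad _).continuousAt.comp (hderiv s (hdom hs).1 (hdom hs).2).continuousAt).continuousWithinAt
  obtain ⟨t₁, ⟨ht₁pos, ht₁t₀⟩, hv0, hmax⟩ := exists_mem_Ioc_isMaxOn_Icc_of_lt ht₀ hEv hlt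
  have hdom₁ : Icc 0 t₁ ⊆ {t : ℝ | 0 ≤ t ∧ ENNReal.ofReal t < T} :=
    (Icc_subset_Icc_right ht₁t₀).trans hdom
  set c := g (v t₁)
  have hsupport : ∀ s, inner ℝ c (v s - v t₁) ≤ E (v s) - E (v t₁) := fun s =>
    hconv.inner_sub_le_of_hasGradientAt trivial trivial (hgrad _)
  have hbound := neg_le_integral_sub_rpow_neg_mul_deriv_of_nonpos hγ0.le hγ1 ht₁pos
    (f := fun s => inner ℝ c (v s - v t₁)) (f' := fun s => inner ℝ c (v' s))
    (fun s hs => by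
      simpa using (hasDerivAt_const s c).inner ℝ ((hderiv s (hdom₁ hs).1 (hdom₁ hs).2).sub_const _))
    ((innerSL ℝ c).continuous.comp_continuousOn (hv'cont.mono hdom₁))
    (fun s hs => (hsupport s).trans (sub_nonpos.2 (hmax hs))) (by simp)
  rw [integral_sub_rpow_neg_mul_inner_eq_zero_of_transpose_eq_neg hγ1 ht₁pos.le hJ
    (hv'cont.mono hdom₁) (heq t₁ ht₁pos (hdom₁ ⟨ht₁pos.le, le_rfl⟩).2), sub_zero,
    neg_nonpos] at hbound
  exact hbound.not_gt (mul_neg_of_pos_of_neg (Real.rpow_pos_of_pos ht₁pos _)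
    ((hsupport 0).trans_lt (sub_neg.2 hv0)))

/-- Energy inequality for fractional Hamiltonian systems: for `0 < γ < 1`, `T ∈ (0,∞]`,
`E : ℝ^m → ℝ` convex and continuously differentiable (with gradient `g`), `J` an
`m × m` real antisymmetric matrix (`Jᵀ = −J`), and `v : [0,T) → ℝ^m` continuously
differentiable satisfying `(1/Γ(1−γ)) ∫_0^t (t−s)^{−γ} v'(s) ds = J ∇E(v(t))` for all
`t ∈ (0,T)`, one has `E(v(t)) ≤ E(v(0))` for all `t ∈ [0,T)`. -/
theorem fractional_hamiltonian_energy_inequality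
    (γ : ℝ) (hγ0 : 0 < γ) (hγ1 : γ < 1) (T : ℝ≥0∞) (hT : 0 < T) (m : ℕ)
    (E : EuclideanSpace ℝ (Fin m) → ℝ)
    (g : EuclideanSpace ℝ (Fin m) → EuclideanSpace ℝ (Fin m))
    (hconv : ConvexOn ℝ Set.univ E)
    (hgrad : ∀ x : EuclideanSpace ℝ (Fin m), HasGradientAt E (g x) x)
    (hgcont : Continuous g)
    (J : Matrix (Fin m) (Fin m) ℝ)
    (hJ : J.transpose = -J)
    (v v' : ℝ → EuclideanSpace ℝ (Fin m))
    (hderiv : ∀ t : ℝ, 0 ≤ t → ENNReal.ofReal t < T → HasDerivAt v (v' t) t)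
    (hv'cont : ContinuousOn v' {t : ℝ | 0 ≤ t ∧ ENNReal.ofReal t < T})
    (heq : ∀ t : ℝ, 0 < t → ENNReal.ofReal t < T →
      (1 / Real.Gamma (1 - γ)) • (∫ s in (0:ℝ)..t, (t - s) ^ (-γ) • v' s) =
        (EuclideanSpace.equiv (Fin m) ℝ).symm
          (J.mulVec ((EuclideanSpace.equiv (Fin m) ℝ) (g (v t))))) :
    ∀ t : ℝ, 0 ≤ t → ENNReal.ofReal t < T → E (v t) ≤ E (v 0) :=
  fractional_hamiltonian_energy_inequality_general γ hγ0 hγ1 T m E g hconv hgrad J hJ v v' hderiv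
    hv'cont heq
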